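/- Let G be a finite non-abelian DC p-group with nilpotency class c. Then for every i with 2 ≤ i ≤ c, the quotient K_i(G)/K_{i+1}(G) of consecutive terms of the lower central series is cyclic. -/

import Mathlib

/-- A group is a `DC`-group if the set of derived subgroups of its subgroups
is a chain under inclusion. -/
def IsDCGroup (G : Type*) [Group G] : Prop :=
  ∀ H K : Subgroup G, ⁅H, H⁆ ≤ ⁅K, K⁆ ∨ ⁅K, K⁆ ≤ ⁅H, H⁆

/-!
In a finite DC-group a central subgroup `⁅H, K⁆` is cyclic: for `h ∈ H`, `k ∈ K` the central
commutator `⁅h, k⁆` generates the derived subgroup of `⟨h, k⟩`, so by the DC property the cyclic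
groups `⟨⁅h, k⁆⟩` form a chain, whose largest member is all of `⁅H, K⁆`. Being a DC-group passes
to quotients, and in `G ⧸ K_{i+1}(G)` the image of `K_i(G) = ⁅K_{i-1}(G), G⁆` is central and
isomorphic to `K_i(G) ⧸ K_{i+1}(G)`.
-/

open Subgroup

open scoped commutatorElement

namespace Subgroup

variable {G : Type*} [Group G]

theorem normal_of_le_center {H : Subgroup G} (h : H ≤ center G) : H.Normal :=
  ⟨fun n hn g => by rwa [mem_center_iff.mp (h hn) g, mul_inv_cancel_right]⟩

theorem commutator_closure_pair_le {N : Subgroup G} [N.Normal] {x y : G} (h : ⁅x, y⁆ ∈ N) :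
    ⁅closure {x, y}, closure {x, y}⁆ ≤ N := by
  set π := QuotientGroup.mk' N
  have hxy : π x * π y = π y * π x := by
    rw [← commutatorElement_eq_one_iff_mul_comm, ← map_commutatorElement, ← MonoidHom.mem_ker,
      QuotientGroup.ker_mk']
    exact h
  have hcomm : IsMulCommutative ((closure {x, y}).map π) := by
    rw [MonoidHom.map_closure, Set.image_pair]
    refine isMulCommutative_closure ?_
    rintro u (rfl | rfl) v (rfl | rfl)
    exacts [rfl, hxy, hxy.symm, rfl]
  rwa [← commutator_self_eq_bot_iff, ← map_commutator, Subgroup.map_eq_bot_iff,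
    QuotientGroup.ker_mk'] at hcomm

theorem commutator_closure_pair_eq_zpowers {x y : G} (h : ⁅x, y⁆ ∈ center G) :
    ⁅closure {x, y}, closure {x, y}⁆ = zpowers ⁅x, y⁆ := by
  have := normal_of_le_center (zpowers_le.mpr h)
  refine le_antisymm (commutator_closure_pair_le (mem_zpowers _)) (zpowers_le.mpr ?_)
  exact commutator_mem_commutator (subset_closure (.inl rfl)) (subset_closure (.inr rfl))

theorem isCyclic_closure_of_isChain_zpowers {S : Set G} (hS : S.Finite)
    (hchain : IsChain (· ≤ ·) (zpowers '' S)) : IsCyclic (closure S) := by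
  rcases S.eq_empty_or_nonempty with rfl | hne
  · rw [closure_empty]
    infer_instance
  obtain ⟨_, ⟨s, hs, rfl⟩, hmax⟩ := (hS.image zpowers).exists_maximal (hne.image zpowers)
  have hle : ∀ t ∈ S, zpowers t ≤ zpowers s := fun t ht =>
    (hchain.total ⟨t, ht, rfl⟩ ⟨s, hs, rfl⟩).elim id (hmax ⟨t, ht, rfl⟩)
  have hS_eq : closure S = zpowers s :=
    le_antisymm ((closure_le _).mpr fun t ht => hle t ht (mem_zpowers t))
      (zpowers_le.mpr (subset_closure hs))
  rw [hS_eq]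
  infer_instance

theorem isCyclic_quotient_subgroupOf_of_isCyclic_map {H N : Subgroup G} [N.Normal]
    (h : IsCyclic (H.map (QuotientGroup.mk' N))) : IsCyclic (H ⧸ N.subgroupOf H) := by
  set φ := (QuotientGroup.mk' N).domRestrict H
  have hker : φ.ker = N.subgroupOf H := by
    rw [MonoidHom.ker_domRestrict, QuotientGroup.ker_mk']
  have e : H ⧸ N.subgroupOf H ≃* H.map (QuotientGroup.mk' N) :=
    ((QuotientGroup.quotientMulEquivOfEq hker).symm.trans
      (QuotientGroup.quotientKerEquivRange φ)).trans
      (MulEquiv.subgroupCongr (MonoidHom.domRestrict_range _ _))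
  exact e.isCyclic.mpr h

end Subgroup

namespace IsDCGroup

variable {G : Type*} [Group G]

theorem of_surjective {G' : Type*} [Group G'] (hdc : IsDCGroup G) {f : G →* G'}
    (hf : Function.Surjective f) : IsDCGroup G' := by
  intro H K
  rw [← map_comap_eq_self_of_surjective hf H, ← map_comap_eq_self_of_surjective hf K,
    ← map_commutator, ← map_commutator]
  exact (hdc _ _).imp (map_mono ·) (map_mono ·)

theorem isCyclic_commutator_of_le_center [Finite G] (hdc : IsDCGroup G) {H K : Subgroup G}
    (h : ⁅H, K⁆ ≤ center G) : IsCyclic (⁅H, K⁆ : Subgroup G) := by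
  have central {u v : G} (hu : u ∈ H) (hv : v ∈ K) : ⁅u, v⁆ ∈ center G :=
    h (commutator_mem_commutator hu hv)
  rw [Subgroup.commutator_def]
  refine isCyclic_closure_of_isChain_zpowers (Set.toFinite _) ?_
  rintro _ ⟨_, ⟨a, ha, b, hb, rfl⟩, rfl⟩ _ ⟨_, ⟨c, hc, d, hd, rfl⟩, rfl⟩ -
  rw [← commutator_closure_pair_eq_zpowers (central ha hb),
    ← commutator_closure_pair_eq_zpowers (central hc hd)]
  exact hdc _ _

theorem isCyclic_lowerCentralSeries_succ_of_eq_bot [Finite G] (hdc : IsDCGroup G) (n : ℕ)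
    (h : (⊤ : Subgroup G).lowerCentralSeries (n + 2) = ⊥) :
    IsCyclic ((⊤ : Subgroup G).lowerCentralSeries (n + 1)) :=
  hdc.isCyclic_commutator_of_le_center (commutator_top_right_eq_bot_iff_le_center.mp h)

end IsDCGroup

theorem dc_lcs_quotient_cyclic_general (G : Type*) [Group G] [Finite G]
    [Group.IsNilpotent G] (hdc : IsDCGroup G) :
    ∀ i : ℕ, 2 ≤ i → i ≤ Group.nilpotencyClass G →
      IsCyclic (↥((⊤ : Subgroup G).lowerCentralSeries (i - 1)) ⧸
        ((⊤ : Subgroup G).lowerCentralSeries i).subgroupOf ((⊤ : Subgroup G).lowerCentralSeries (i - 1))) := by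
  intro i hi _
  obtain ⟨n, rfl⟩ : ∃ n, i = n + 2 := ⟨i - 2, by omega⟩
  set N := (⊤ : Subgroup G).lowerCentralSeries (n + 2)
  have hπ := QuotientGroup.mk'_surjective N
  have map_lcs (k : ℕ) : ((⊤ : Subgroup G).lowerCentralSeries k).map (QuotientGroup.mk' N) =
      (⊤ : Subgroup (G ⧸ N)).lowerCentralSeries k := by
    rw [map_lowerCentralSeries, map_top_of_surjective _ hπ]
  have hcyc := (hdc.of_surjective hπ).isCyclic_lowerCentralSeries_succ_of_eq_bot n
    (by rw [← map_lcs, Subgroup.map_eq_bot_iff, QuotientGroup.ker_mk'])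
  rw [← map_lcs] at hcyc
  exact isCyclic_quotient_subgroupOf_of_isCyclic_map hcyc

theorem dc_lcs_quotient_cyclic (p : ℕ) [Fact p.Prime] (G : Type*) [Group G] [Finite G]
    [Group.IsNilpotent G] (hG : IsPGroup p G) (hdc : IsDCGroup G)
    (hna : ¬ ∀ a b : G, a * b = b * a) :
    ∀ i : ℕ, 2 ≤ i → i ≤ Group.nilpotencyClass G →
      IsCyclic (↥((⊤ : Subgroup G).lowerCentralSeries (i - 1)) ⧸
        ((⊤ : Subgroup G).lowerCentralSeries i).subgroupOf ((⊤ : Subgroup G).lowerCentralSeries (i - 1))) :=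
  dc_lcs_quotient_cyclic_general G hdc
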